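/- For integers r ≥ 2 and prime power q ≥ 49 that is a square, the TVZ-type LRC bound R₁(δ) = r/(r+1) - (1/(√q - 1))·(r/(r+1)) - δ exceeds the bound R₂(δ) = (r/(r+1))·(1 - δ - (√q + r)/(q-1)) if and only if δ < r(r-1)/(q-1). -/
import Mathlib


/-- For r ≥ 2 and a square prime power q ≥ 49 with s = √q, the TVZ-type LRC bound
R₁(δ) = r/(r+1) - (1/(s-1))·(r/(r+1)) - δ exceeds the Barg–Tamo–Vlăduţ bound
R₂(δ) = (r/(r+1))·(1 - δ - (s+r)/(q-1)) if and only if δ < r(r-1)/(q-1). -/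
theorem tvz_vs_btv
    (q s r : ℕ) (hq : 49 ≤ q) (hs : s ^ 2 = q)
    (hpp : ∃ p k : ℕ, p.Prime ∧ 1 ≤ k ∧ q = p ^ k)
    (hr : 2 ≤ r) (δ : ℝ) (hδ0 : 0 ≤ δ) (hδ1 : δ ≤ 1) :
    ((r : ℝ) / (r + 1) * (1 - δ - ((s : ℝ) + r) / ((q : ℝ) - 1)) <
        (r : ℝ) / (r + 1) - (1 / ((s : ℝ) - 1)) * ((r : ℝ) / (r + 1)) - δ) ↔
      δ < (r : ℝ) * ((r : ℝ) - 1) / ((q : ℝ) - 1) := by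
  have hs7 : 7 ≤ s := by nlinarith [sq_nonneg s]
  have hqs : (q : ℝ) = (s : ℝ) ^ 2 := by
    rw [← hs]; push_cast; ring
  have hsr : (7 : ℝ) ≤ (s : ℝ) := by exact_mod_cast hs7
  have hrr : (2 : ℝ) ≤ (r : ℝ) := by exact_mod_cast hr
  have h1 : (0 : ℝ) < (s : ℝ) - 1 := by linarith
  have h2 : (0 : ℝ) < (r : ℝ) + 1 := by linarith
  have h3 : (0 : ℝ) < (s : ℝ) ^ 2 - 1 := by nlinarith
  have key : (r : ℝ) / (r + 1) - (1 / ((s : ℝ) - 1)) * ((r : ℝ) / (r + 1)) - δ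
      - (r : ℝ) / (r + 1) * (1 - δ - ((s : ℝ) + r) / ((q : ℝ) - 1))
      = ((r : ℝ) * ((r : ℝ) - 1) / ((q : ℝ) - 1) - δ) / (r + 1) := by
    rw [hqs]
    field_simp
    ring
  rw [← sub_pos, key, ← sub_pos (b := δ)]
  exact div_pos_iff_of_pos_right h2
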